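/- arXiv:1610.00021 — 2 statements merged into one kernel-verified Lean document; each statement's English description precedes it below -/
import Mathlib

section
/- For any t ≥ 0 and x ∈ ℓ₂⁺, almost surely S₂^{G_t} < ∞, and in particular all connected components of G_t have finite total weight almost surely. -/
/-!
Choose a finite set `S` of vertices with `t ∑_{i ∉ S} x_i² < 1` and isolate the vertices of `S`.
The remaining graph is subcritical: a union bound over self-avoiding paths, whose edges are
independent, bounds its expected `S₂` by a convergent geometric series. A vertex outside `S`
connected to `S` is reached by a path off `S` followed by one edge into `S`, and that edge is
independent of the graph off `S`; so the expected weight attached to `S` is at most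
`t (∑_{j ∈ S} x_j)` times the previous expectation. Both are therefore almost surely finite.
Two connected vertices of `G_t` either both lie in `S` or are attached to it, or are connected
off `S`, so `S₂^{G_t}` is at most the squared weight of `S` and its attached vertices plus the
`S₂` off `S`. A single component contributes its squared weight to `S₂`.
-/

open MeasureTheory ProbabilityTheory Filter
open scoped ENNReal

/-- The (real-valued) total weight of the connected component `C` of `G`. -/
noncomputable def compW {V : Type*} (x : V → ℝ) (G : SimpleGraph V)
    (C : G.ConnectedComponent) : ℝ :=
  ∑' v : {v : V // G.connectedComponentMk v = C}, x v

/-- The (extended-real-valued) total weight of the connected component `C` of `G`. -/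
noncomputable def compWE {V : Type*} (x : V → ℝ) (G : SimpleGraph V)
    (C : G.ConnectedComponent) : ℝ≥0∞ :=
  ∑' v : {v : V // G.connectedComponentMk v = C}, ENNReal.ofReal (x v)

/-- `S₂^G`: the sum of the squared component weights of `G` (with weights `x`). -/
noncomputable def S2E {V : Type*} (x : V → ℝ) (G : SimpleGraph V) : ℝ≥0∞ :=
  ∑' C : G.ConnectedComponent, compWE x G C ^ 2

/-- The decreasing rearrangement of a nonnegative family `w`: `ordOf w n` is the
`n`-th largest value (counted from `n = 0`). -/
noncomputable def ordOf {α : Type*} (w : α → ℝ) (n : ℕ) : ℝ :=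
  sInf {r : ℝ | 0 ≤ r ∧ {a : α | r < w a}.Finite ∧ Nat.card {a : α | r < w a} ≤ n}

/-- `ord(x, G)`: the decreasing rearrangement of the component weights of `G`. -/
noncomputable def ordSeq {V : Type*} (x : V → ℝ) (G : SimpleGraph V) : ℕ → ℝ :=
  ordOf (compW x G)

/-- The `ℓ₂` distance between two sequences. -/
noncomputable def l2dist (m m' : ℕ → ℝ) : ℝ :=
  Real.sqrt (∑' n, (m n - m' n) ^ 2)

/-- The `ℓ₂` distance between two sequences, with values in `ℝ≥0∞`. -/
noncomputable def l2edist (m m' : ℕ → ℝ) : ℝ≥0∞ :=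
  (∑' n, ENNReal.ofReal ((m n - m' n) ^ 2)) ^ (2⁻¹ : ℝ)

/-- The graphical-construction random graph on `ℕ`: the edge `{i,j}` is present
iff `ξ_{i,j} ≤ t·x_i·x_j`. -/
noncomputable def expGraph {Ω : Type*} (ξ : ℕ → ℕ → Ω → ℝ) (x : ℕ → ℝ) (t : ℝ)
    (ω : Ω) : SimpleGraph ℕ :=
  SimpleGraph.fromRel (fun i j => ξ (min i j) (max i j) ω ≤ t * x i * x j)

lemma exists_finset_mul_tsum_indicator_compl_sq_lt_one {α : Type*} {g : α → ℝ≥0∞}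
    (hg : ∑' a, g a ^ 2 ≠ ⊤) {r : ℝ≥0∞} (hr : r ≠ ⊤) :
    ∃ s : Finset α, r * ∑' a, ((s : Set α)ᶜ).indicator g a ^ 2 < 1 := by
  have h := ENNReal.Tendsto.const_mul (ENNReal.tendsto_tsum_compl_atTop_zero hg) (Or.inr hr)
  rw [mul_zero] at h
  obtain ⟨s, hs⟩ := (h.eventually (gt_mem_nhds zero_lt_one)).exists
  refine ⟨s, lt_of_eq_of_lt (congrArg (r * ·) ?_) hs⟩
  simp_rw [pow_two, ← Set.indicator_mul]
  exact tsum_subtype ((s : Set α)ᶜ) (fun a => g a * g a) |>.symm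

namespace SimpleGraph

variable {V : Type*}

def isolate (G : SimpleGraph V) (S : Set V) : SimpleGraph V where
  Adj a b := G.Adj a b ∧ a ∉ S ∧ b ∉ S
  symm := ⟨fun _ _ h => ⟨h.1.symm, h.2.2, h.2.1⟩⟩
  loopless := ⟨fun _ h => G.irrefl h.1⟩

def attached (G : SimpleGraph V) (S : Set V) : Set V :=
  {v | ∃ u ∉ S, ∃ j ∈ S, (G.isolate S).Reachable v u ∧ G.Adj u j}

noncomputable def reachPairSum (G : SimpleGraph V) (w : V → ℝ≥0∞) : ℝ≥0∞ :=
  ∑' p : V × V, {p : V × V | G.Reachable p.1 p.2}.indicator (fun p => w p.1 * w p.2) p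

variable {G : SimpleGraph V} {S : Set V}

@[simp]
lemma isolate_adj {a b : V} : (G.isolate S).Adj a b ↔ G.Adj a b ∧ a ∉ S ∧ b ∉ S := Iff.rfl

lemma notMem_of_reachable_isolate {u v : V} (h : (G.isolate S).Reachable v u) (hu : u ∉ S) :
    v ∉ S := by
  obtain ⟨p⟩ := h
  cases p with
  | nil => exact hu
  | cons hadj _ => exact (isolate_adj.1 hadj).2.1

lemma attached_subset_compl : G.attached S ⊆ Sᶜ := by
  rintro v ⟨u, hu, -, -, hvu, -⟩
  exact notMem_of_reachable_isolate hvu hu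

lemma Reachable.reachable_isolate_or_mem_attached {a b : V} (h : G.Reachable a b) (ha : a ∉ S) :
    (b ∉ S ∧ (G.isolate S).Reachable a b) ∨ a ∈ G.attached S := by
  obtain ⟨p⟩ := h
  induction p with
  | nil => exact .inl ⟨ha, .rfl⟩
  | @cons a c b hac p ih =>
    by_cases hc : c ∈ S
    · exact .inr ⟨a, ha, c, hc, .rfl, hac⟩
    have hac' : (G.isolate S).Adj a c := isolate_adj.2 ⟨hac, ha, hc⟩
    rcases ih hc with ⟨hb, hcb⟩ | ⟨u, hu, j, hj, hcu, huj⟩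
    · exact .inl ⟨hb, hac'.reachable.trans hcb⟩
    · exact .inr ⟨u, hu, j, hj, hac'.reachable.trans hcu, huj⟩

lemma Reachable.mem_union_attached_or_reachable_isolate {a b : V} (h : G.Reachable a b) :
    (a ∈ S ∪ G.attached S ∧ b ∈ S ∪ G.attached S) ∨
      (a ∉ S ∧ b ∉ S ∧ (G.isolate S).Reachable a b) := by
  by_cases ha : a ∈ S
  · by_cases hb : b ∈ S
    · exact .inl ⟨.inl ha, .inl hb⟩
    rcases h.symm.reachable_isolate_or_mem_attached hb with ⟨ha', -⟩ | hb'
    · exact absurd ha ha'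
    · exact .inl ⟨.inl ha, .inr hb'⟩
  rcases h.reachable_isolate_or_mem_attached ha with ⟨hb, hab⟩ | ha'
  · exact .inr ⟨ha, hb, hab⟩
  by_cases hb : b ∈ S
  · exact .inl ⟨.inr ha', .inl hb⟩
  rcases h.symm.reachable_isolate_or_mem_attached hb with ⟨-, hba⟩ | hb'
  · exact .inr ⟨ha, hb, hba.symm⟩
  · exact .inl ⟨.inr ha', .inr hb'⟩

lemma tsum_sq_eq_tsum_prod (f : V → ℝ≥0∞) :
    (∑' v, f v) ^ 2 = ∑' p : V × V, f p.1 * f p.2 := by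
  simp_rw [pow_two, ENNReal.tsum_prod', ENNReal.tsum_mul_left, ENNReal.tsum_mul_right]

lemma reachPairSum_le_isolate (G : SimpleGraph V) (S : Set V) (w : V → ℝ≥0∞) :
    G.reachPairSum w ≤
      (∑' v, S.indicator w v + ∑' v, (G.attached S).indicator (Sᶜ.indicator w) v) ^ 2 +
        (G.isolate S).reachPairSum (Sᶜ.indicator w) := by
  set f := fun v => S.indicator w v + (G.attached S).indicator (Sᶜ.indicator w) v
  have hf : ∀ v ∈ S ∪ G.attached S, w v ≤ f v := by
    rintro v (hv | hv)
    · simp [f, hv]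
    · simp [f, hv, attached_subset_compl hv]
  rw [← ENNReal.tsum_add, tsum_sq_eq_tsum_prod, reachPairSum, reachPairSum, ← ENNReal.tsum_add]
  refine ENNReal.tsum_le_tsum fun ⟨a, b⟩ => ?_
  by_cases h : G.Reachable a b
  · rcases h.mem_union_attached_or_reachable_isolate (S := S) with ⟨ha, hb⟩ | ⟨ha, hb, hab⟩
    · simp only [Set.indicator_of_mem (show (a, b) ∈ {p : V × V | G.Reachable p.1 p.2} from h)]
      exact le_add_right (mul_le_mul' (hf a ha) (hf b hb))
    · simp [h, hab, ha, hb]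
  · simp [h]

lemma S2E_eq_reachPairSum (x : V → ℝ) (G : SimpleGraph V) :
    S2E x G = G.reachPairSum fun v => ENNReal.ofReal (x v) := by
  set w := fun v => ENNReal.ofReal (x v)
  set W := fun C : G.ConnectedComponent => ∑' v : {v // G.connectedComponentMk v = C}, w v
  have hW : ∀ a, W (G.connectedComponentMk a) = ∑' b, {b | G.Reachable a b}.indicator w b :=
    fun a => ((Equiv.subtypeEquivRight fun b => ConnectedComponent.eq.trans
      ⟨.symm, .symm⟩).tsum_eq fun b => w b.1).trans (tsum_subtype {b | G.Reachable a b} w)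
  calc S2E x G
      = ∑' C, ∑' v : G.connectedComponentMk ⁻¹' {C}, w v * W (G.connectedComponentMk v) := by
        rw [S2E]
        refine tsum_congr fun C => ?_
        rw [compWE, pow_two, ← ENNReal.tsum_mul_right]
        exact tsum_congr fun v => by rw [show G.connectedComponentMk v = C from v.2]
    _ = ∑' a, w a * W (G.connectedComponentMk a) :=
        ENNReal.tsum_fiberwise (fun a => w a * W (G.connectedComponentMk a)) _
    _ = G.reachPairSum w := by
        rw [reachPairSum, ENNReal.tsum_prod']
        refine tsum_congr fun a => ?_
        rw [hW, ← ENNReal.tsum_mul_left]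
        refine tsum_congr fun b => ?_
        by_cases h : G.Reachable a b <;> simp [h]

lemma tsum_reachable_sq_le_S2E (x : V → ℝ) (G : SimpleGraph V) (k : V) :
    (∑' v : {v // G.Reachable k v}, ENNReal.ofReal (x v)) ^ 2 ≤ S2E x G := by
  have hk : (∑' v : {v // G.Reachable k v}, ENNReal.ofReal (x v)) =
      compWE x G (G.connectedComponentMk k) :=
    (Equiv.subtypeEquivRight fun v => (ConnectedComponent.eq.trans ⟨.symm, .symm⟩).symm).tsum_eq
      fun v => ENNReal.ofReal (x v.1)
  rw [hk]
  exact ENNReal.le_tsum (f := fun C => compWE x G C ^ 2) _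

lemma tsum_reachable_lt_top_of_S2E_lt_top {x : V → ℝ} (h : S2E x G < ⊤) (k : V) :
    ∑' v : {v // G.Reachable k v}, ENNReal.ofReal (x v) < ⊤ := by
  simpa using (tsum_reachable_sq_le_S2E x G k).trans_lt h

lemma S2E_lt_top_of_isolate (x : V → ℝ) (G : SimpleGraph V) (S : Set V)
    (hS : ∑' v, S.indicator (fun v => ENNReal.ofReal (x v)) v < ⊤)
    (hattached : ∑' v, (G.attached S).indicator (Sᶜ.indicator fun v => ENNReal.ofReal (x v)) v < ⊤)
    (hisolate : (G.isolate S).reachPairSum (Sᶜ.indicator fun v => ENNReal.ofReal (x v)) < ⊤) :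
    S2E x G < ⊤ := by
  rw [S2E_eq_reachPairSum]
  exact (G.reachPairSum_le_isolate S _).trans_lt
    (ENNReal.add_lt_top.2 ⟨ENNReal.pow_lt_top (ENNReal.add_lt_top.2 ⟨hS, hattached⟩), hisolate⟩)

end SimpleGraph

section Paths

variable {V : Type*}

open Matrix (vecCons)

noncomputable def pathWeight (q : V → V → ℝ≥0∞) {n : ℕ} (c : Fin (n + 1) → V) : ℝ≥0∞ :=
  ∏ i : Fin n, q (c i.castSucc) (c i.succ)

lemma pathWeight_vecCons (q : V → V → ℝ≥0∞) (u : V) {n : ℕ} (c : Fin (n + 1) → V) :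
    pathWeight q (vecCons u c) = q u (c 0) * pathWeight q c := by
  simp [pathWeight, Fin.prod_univ_succ]

lemma vecCons_last (u : V) {n : ℕ} (c : Fin (n + 1) → V) :
    vecCons u c (Fin.last (n + 1)) = c (Fin.last n) := by
  rw [← Fin.succ_last, Matrix.cons_val_succ]

lemma tsum_pathWeight_mul (r : ℝ≥0∞) (g : V → ℝ≥0∞) (n : ℕ) (u : V) :
    ∑' f : Fin n → V, pathWeight (fun a b => r * g a * g b) (vecCons u f) *
        g (vecCons u f (Fin.last n)) = (r * ∑' v, g v ^ 2) ^ n * g u := by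
  induction n generalizing u with
  | zero => simp [pathWeight]
  | succ n ih =>
    rw [← (Fin.consEquiv fun _ => V).tsum_eq, ENNReal.tsum_prod']
    change ∑' v, ∑' f, pathWeight _ (vecCons u (vecCons v f)) * g (vecCons u (vecCons v f) _) = _
    simp only [pathWeight_vecCons, Matrix.cons_val_zero, vecCons_last, mul_assoc (r * g u * _),
      ENNReal.tsum_mul_left, ih]
    calc _ = ∑' v, (r * ∑' v, g v ^ 2) ^ n * r * g u * g v ^ 2 := tsum_congr fun v => by ring
      _ = _ := by rw [ENNReal.tsum_mul_left]; ring

lemma SimpleGraph.Reachable.exists_injective_path {G : SimpleGraph V} {u v : V}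
    (h : G.Reachable u v) :
    ∃ n, ∃ f : Fin n → V, Function.Injective (vecCons u f) ∧ vecCons u f (Fin.last n) = v ∧
      ∀ i : Fin n, G.Adj (vecCons u f i.castSucc) (vecCons u f i.succ) := by
  classical
  obtain ⟨p⟩ := h
  set q := p.toPath.1
  have hq : vecCons u (Fin.tail fun i : Fin (q.length + 1) => q.getVert i) =
      fun i : Fin (q.length + 1) => q.getVert i := by
    ext i
    cases i using Fin.cases <;> simp [Fin.tail]
  refine ⟨q.length, Fin.tail fun i : Fin (q.length + 1) => q.getVert i, ?_⟩
  rw [hq]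
  refine ⟨fun i j hij => Fin.ext ?_, q.getVert_length, fun i => q.adj_getVert_succ i.2⟩
  exact p.toPath.2.getVert_injOn (Nat.lt_succ_iff.1 i.2) (Nat.lt_succ_iff.1 j.2) hij

lemma SimpleGraph.reachable_of_forall_adj {G : SimpleGraph V} {n : ℕ} (c : Fin (n + 1) → V)
    (h : ∀ i : Fin n, G.Adj (c i.castSucc) (c i.succ)) (j : Fin (n + 1)) :
    G.Reachable (c 0) (c j) := by
  induction j using Fin.induction with
  | zero => rfl
  | succ i ih => exact ih.trans (h i).reachable

end Paths

section RandomGraph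

open Matrix (vecCons)

variable {Ω V : Type*} [Countable V]

lemma measurableSet_reachable {m : MeasurableSpace Ω} (H : Ω → SimpleGraph V)
    (hH : ∀ a b, MeasurableSet {ω | (H ω).Adj a b}) (u v : V) :
    MeasurableSet {ω | (H ω).Reachable u v} := by
  have : {ω | (H ω).Reachable u v} = ⋃ n, ⋃ f : Fin n → V, ⋃ (_ : vecCons u f (Fin.last n) = v),
      ⋂ i : Fin n, {ω | (H ω).Adj (vecCons u f i.castSucc) (vecCons u f i.succ)} := by
    ext ω
    simp only [Set.mem_iUnion, Set.mem_iInter]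
    constructor
    · intro h
      obtain ⟨n, f, -, hv, hadj⟩ := h.exists_injective_path
      exact ⟨n, f, hv, hadj⟩
    · rintro ⟨n, f, rfl, hadj⟩
      simpa using SimpleGraph.reachable_of_forall_adj _ hadj (Fin.last n)
  rw [this]
  exact .iUnion fun n => .iUnion fun f => .iUnion fun _ => .iInter fun i => hH _ _

variable [MeasurableSpace Ω] (μ : Measure Ω)

/-- Union bound over self-avoiding paths. -/
lemma measure_reachable_le (H : Ω → SimpleGraph V) (q : V → V → ℝ≥0∞)
    (hq : ∀ n (c : Fin (n + 1) → V), Function.Injective c →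
      μ {ω | ∀ i : Fin n, (H ω).Adj (c i.castSucc) (c i.succ)} ≤ pathWeight q c) (u v : V) :
    μ {ω | (H ω).Reachable u v} ≤ ∑' n, ∑' f : Fin n → V,
      {f : Fin n → V | vecCons u f (Fin.last n) = v}.indicator
        (fun f => pathWeight q (vecCons u f)) f := by
  set E := fun n (f : Fin n → V) => {ω | Function.Injective (vecCons u f) ∧
    vecCons u f (Fin.last n) = v ∧
      ∀ i : Fin n, (H ω).Adj (vecCons u f i.castSucc) (vecCons u f i.succ)}
  have hE : ∀ n f, μ (E n f) ≤ {f : Fin n → V | vecCons u f (Fin.last n) = v}.indicator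
      (fun f => pathWeight q (vecCons u f)) f := by
    intro n f
    by_cases hf : Function.Injective (vecCons u f) ∧ vecCons u f (Fin.last n) = v
    · rw [Set.indicator_of_mem (s := {f : Fin n → V | vecCons u f (Fin.last n) = v}) hf.2]
      exact (measure_mono fun ω h => h.2.2).trans (hq n _ hf.1)
    · rw [show E n f = ∅ from Set.eq_empty_of_forall_notMem fun ω h => hf ⟨h.1, h.2.1⟩,
        measure_empty]
      exact zero_le
  calc μ {ω | (H ω).Reachable u v} ≤ μ (⋃ n, ⋃ f, E n f) := measure_mono fun ω h => by
        obtain ⟨n, f, hf⟩ := SimpleGraph.Reachable.exists_injective_path h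
        exact Set.mem_iUnion₂.2 ⟨n, f, hf⟩
    _ ≤ ∑' n, ∑' f, μ (E n f) :=
        (measure_iUnion_le _).trans (ENNReal.tsum_le_tsum fun n => measure_iUnion_le _)
    _ ≤ _ := ENNReal.tsum_le_tsum fun n => ENNReal.tsum_le_tsum fun f => hE n f

lemma tsum_mul_measure_reachable_le (H : Ω → SimpleGraph V) (q : V → V → ℝ≥0∞)
    (hq : ∀ n (c : Fin (n + 1) → V), Function.Injective c →
      μ {ω | ∀ i : Fin n, (H ω).Adj (c i.castSucc) (c i.succ)} ≤ pathWeight q c)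
    (g : V → ℝ≥0∞) (u : V) :
    ∑' v, g v * μ {ω | (H ω).Reachable u v} ≤
      ∑' n, ∑' f : Fin n → V, pathWeight q (vecCons u f) * g (vecCons u f (Fin.last n)) := by
  refine (ENNReal.tsum_le_tsum fun v =>
    mul_le_mul_right (measure_reachable_le μ H q hq u v) _).trans (le_of_eq ?_)
  simp_rw [← ENNReal.tsum_mul_left]
  rw [ENNReal.tsum_comm]
  refine tsum_congr fun n => ?_
  rw [ENNReal.tsum_comm]
  refine tsum_congr fun f => ?_
  rw [tsum_eq_single (vecCons u f (Fin.last n)) fun v hv => by simp [Ne.symm hv]]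
  simp [mul_comm]

lemma tsum_mul_mul_measure_reachable_le (H : Ω → SimpleGraph V) (r : ℝ≥0∞) (g : V → ℝ≥0∞)
    (hq : ∀ n (c : Fin (n + 1) → V), Function.Injective c →
      μ {ω | ∀ i : Fin n, (H ω).Adj (c i.castSucc) (c i.succ)} ≤
        pathWeight (fun a b => r * g a * g b) c) :
    ∑' p : V × V, g p.1 * g p.2 * μ {ω | (H ω).Reachable p.1 p.2} ≤
      (1 - r * ∑' v, g v ^ 2)⁻¹ * ∑' v, g v ^ 2 := by
  generalize hA : ∑' v, g v ^ 2 = A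
  calc ∑' p : V × V, g p.1 * g p.2 * μ {ω | (H ω).Reachable p.1 p.2}
      = ∑' u, g u * ∑' v, g v * μ {ω | (H ω).Reachable u v} := by
        simp_rw [ENNReal.tsum_prod', ← ENNReal.tsum_mul_left, mul_assoc]
    _ ≤ ∑' u, g u * ((1 - r * A)⁻¹ * g u) := by
        refine ENNReal.tsum_le_tsum fun u => mul_le_mul_right ?_ _
        refine (tsum_mul_measure_reachable_le μ H _ hq g u).trans (le_of_eq ?_)
        simp_rw [tsum_pathWeight_mul, hA, ENNReal.tsum_mul_right, ENNReal.tsum_geometric]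
    _ = ∑' u, (1 - r * A)⁻¹ * g u ^ 2 := tsum_congr fun u => by ring
    _ = (1 - r * A)⁻¹ * A := by rw [ENNReal.tsum_mul_left, hA]

lemma lintegral_tsum_indicator_const {ι : Type*} [Countable ι] {E : ι → Set Ω}
    (hE : ∀ i, MeasurableSet (E i)) (c : ι → ℝ≥0∞) :
    ∫⁻ ω, ∑' i, (E i).indicator (fun _ => c i) ω ∂μ = ∑' i, c i * μ (E i) :=
  (lintegral_tsum fun i => (measurable_const.indicator (hE i)).aemeasurable).trans
    (tsum_congr fun i => lintegral_indicator_const (hE i) _)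

lemma measurable_reachPairSum {H : Ω → SimpleGraph V}
    (hH : ∀ u v, MeasurableSet {ω | (H ω).Reachable u v}) (g : V → ℝ≥0∞) :
    Measurable fun ω => (H ω).reachPairSum g :=
  Measurable.tsum fun p : V × V => measurable_const.indicator (hH p.1 p.2)

lemma lintegral_reachPairSum {H : Ω → SimpleGraph V}
    (hH : ∀ u v, MeasurableSet {ω | (H ω).Reachable u v}) (g : V → ℝ≥0∞) :
    ∫⁻ ω, (H ω).reachPairSum g ∂μ =
      ∑' p : V × V, g p.1 * g p.2 * μ {ω | (H ω).Reachable p.1 p.2} :=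
  lintegral_tsum_indicator_const μ (fun p : V × V => hH p.1 p.2) _

end RandomGraph

section ExpGraph

variable {Ω : Type*} {ξ : ℕ → ℕ → Ω → ℝ} {x : ℕ → ℝ} {t : ℝ}

lemma expGraph_adj {ω : Ω} {a b : ℕ} :
    (expGraph ξ x t ω).Adj a b ↔ a ≠ b ∧ ξ (min a b) (max a b) ω ≤ t * x a * x b := by
  rw [expGraph, SimpleGraph.fromRel_adj, min_comm b, max_comm b, mul_right_comm t (x b),
    or_self]

def edgeIndex {a b : ℕ} (h : a ≠ b) : {p : ℕ × ℕ // p.1 < p.2} :=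
  ⟨(min a b, max a b), min_lt_max.2 h⟩

lemma setOf_expGraph_adj {a b : ℕ} (h : a ≠ b) :
    {ω | (expGraph ξ x t ω).Adj a b} =
      ξ (edgeIndex h).1.1 (edgeIndex h).1.2 ⁻¹' Set.Iic (t * x a * x b) := by
  ext ω
  simp [expGraph_adj, h, edgeIndex]

variable [MeasurableSpace Ω] {μ : Measure Ω} [IsProbabilityMeasure μ]

lemma measure_le_le_ofReal_of_exponential {X : Ω → ℝ} (hX : Measurable X)
    (hlaw : ∀ s : ℝ, 0 ≤ s → μ {ω | s < X ω} = ENNReal.ofReal (Real.exp (-s)))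
    {s : ℝ} (hs : 0 ≤ s) :
    μ {ω | X ω ≤ s} ≤ ENNReal.ofReal s := by
  have hcompl : {ω | X ω ≤ s} = {ω | s < X ω}ᶜ := by ext; simp
  rw [hcompl, prob_compl_eq_one_sub (measurableSet_lt measurable_const hX), hlaw s hs,
    tsub_le_iff_right, ← ENNReal.ofReal_add hs (Real.exp_nonneg _), ← ENNReal.ofReal_one]
  exact ENNReal.ofReal_le_ofReal (by linarith [Real.add_one_le_exp (-s)])

lemma measure_expGraph_adj_le (hmeas : ∀ i j, Measurable (ξ i j))
    (hlaw : ∀ i j, i < j → ∀ s : ℝ, 0 ≤ s →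
      μ {ω | s < ξ i j ω} = ENNReal.ofReal (Real.exp (-s)))
    (hx : ∀ i, 0 ≤ x i) (ht : 0 ≤ t) {a b : ℕ} (hab : a ≠ b) :
    μ {ω | (expGraph ξ x t ω).Adj a b} ≤ ENNReal.ofReal (t * x a * x b) := by
  rw [setOf_expGraph_adj hab]
  exact measure_le_le_ofReal_of_exponential (hmeas _ _) (hlaw _ _ (edgeIndex hab).2)
    (mul_nonneg (mul_nonneg ht (hx _)) (hx _))

/-- The edges of a self-avoiding path are distinct, so independence makes the probability
of the path a product over its edges. -/
lemma measure_expGraph_path_le (hmeas : ∀ i j, Measurable (ξ i j))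
    (hlaw : ∀ i j, i < j → ∀ s : ℝ, 0 ≤ s →
      μ {ω | s < ξ i j ω} = ENNReal.ofReal (Real.exp (-s)))
    (hindep : iIndepFun (fun p : {p : ℕ × ℕ // p.1 < p.2} => ξ p.1.1 p.1.2) μ)
    (hx : ∀ i, 0 ≤ x i) (ht : 0 ≤ t) {n : ℕ} (c : Fin (n + 1) → ℕ)
    (hc : Function.Injective c) :
    μ {ω | ∀ i : Fin n, (expGraph ξ x t ω).Adj (c i.castSucc) (c i.succ)} ≤
      pathWeight (fun a b => ENNReal.ofReal (t * x a * x b)) c := by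
  have hne : ∀ i : Fin n, c i.castSucc ≠ c i.succ := fun i h =>
    (Fin.castSucc_lt_succ : i.castSucc < i.succ).ne (hc h)
  set e : Fin n → {p : ℕ × ℕ // p.1 < p.2} := fun i => edgeIndex (hne i)
  have he : Function.Injective e := by
    intro i j hij
    simp only [e, edgeIndex, Subtype.mk.injEq, Prod.mk.injEq] at hij
    have key : (c i.castSucc = c j.castSucc ∧ c i.succ = c j.succ) ∨
        (c i.castSucc = c j.succ ∧ c i.succ = c j.castSucc) := by omega
    rcases key with ⟨h, -⟩ | ⟨h₁, h₂⟩
    · exact Fin.castSucc_injective _ (hc h)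
    · have h₁ := congrArg Fin.val (hc h₁)
      have h₂ := congrArg Fin.val (hc h₂)
      simp only [Fin.val_castSucc, Fin.val_succ] at h₁ h₂
      omega
  have hevent : {ω | ∀ i : Fin n, (expGraph ξ x t ω).Adj (c i.castSucc) (c i.succ)} =
      ⋂ i ∈ Finset.univ, (fun i => ξ (e i).1.1 (e i).1.2) i ⁻¹'
        Set.Iic (t * x (c i.castSucc) * x (c i.succ)) := by
    simp only [Finset.mem_univ, Set.iInter_true, Set.ofPred_forall]
    exact Set.iInter_congr fun i => setOf_expGraph_adj (hne i)
  rw [hevent, (hindep.precomp he).measure_inter_preimage_eq_mul _ fun i _ => measurableSet_Iic]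
  refine Finset.prod_le_prod' fun i _ => ?_
  rw [← setOf_expGraph_adj (hne i)]
  exact measure_expGraph_adj_le hmeas hlaw hx ht (hne i)

lemma measure_isolate_path_le (hmeas : ∀ i j, Measurable (ξ i j))
    (hlaw : ∀ i j, i < j → ∀ s : ℝ, 0 ≤ s →
      μ {ω | s < ξ i j ω} = ENNReal.ofReal (Real.exp (-s)))
    (hindep : iIndepFun (fun p : {p : ℕ × ℕ // p.1 < p.2} => ξ p.1.1 p.1.2) μ)
    (hx : ∀ i, 0 ≤ x i) (ht : 0 ≤ t) (S : Set ℕ) {n : ℕ} (c : Fin (n + 1) → ℕ)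
    (hc : Function.Injective c) :
    μ {ω | ∀ i : Fin n, ((expGraph ξ x t ω).isolate S).Adj (c i.castSucc) (c i.succ)} ≤
      pathWeight (fun a b => ENNReal.ofReal t * Sᶜ.indicator (fun v => ENNReal.ofReal (x v)) a *
        Sᶜ.indicator (fun v => ENNReal.ofReal (x v)) b) c := by
  by_cases hS : ∀ i : Fin n, c i.castSucc ∉ S ∧ c i.succ ∉ S
  · have hweight : pathWeight (fun a b => ENNReal.ofReal t *
          Sᶜ.indicator (fun v => ENNReal.ofReal (x v)) a *
          Sᶜ.indicator (fun v => ENNReal.ofReal (x v)) b) c =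
        pathWeight (fun a b => ENNReal.ofReal (t * x a * x b)) c := by
      refine Finset.prod_congr rfl fun i _ => ?_
      dsimp only
      rw [ENNReal.ofReal_mul (mul_nonneg ht (hx _)), ENNReal.ofReal_mul ht,
        Set.indicator_of_mem (hS i).1, Set.indicator_of_mem (hS i).2]
    rw [hweight]
    exact (measure_mono fun ω h i => (h i).1).trans
      (measure_expGraph_path_le hmeas hlaw hindep hx ht c hc)
  · obtain ⟨i, hi⟩ := not_forall.1 hS
    exact (measure_mono (t := ∅) fun ω h => hi ⟨(h i).2.1, (h i).2.2⟩).trans (by simp)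

end ExpGraph

section TailIndependence

variable {Ω : Type*} {ξ : ℕ → ℕ → Ω → ℝ} {x : ℕ → ℝ} {t : ℝ}

abbrev tailSigma (ξ : ℕ → ℕ → Ω → ℝ) (S : Set ℕ) : MeasurableSpace Ω :=
  ⨆ p ∈ {p : {p : ℕ × ℕ // p.1 < p.2} | p.1.1 ∉ S ∧ p.1.2 ∉ S},
    MeasurableSpace.comap (ξ p.1.1 p.1.2) inferInstance

lemma measurableSet_isolate_adj_tailSigma (S : Set ℕ) (a b : ℕ) :
    MeasurableSet[tailSigma ξ S] {ω | ((expGraph ξ x t ω).isolate S).Adj a b} := by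
  by_cases h : a ≠ b ∧ a ∉ S ∧ b ∉ S
  · have hset : {ω | ((expGraph ξ x t ω).isolate S).Adj a b} = {ω | (expGraph ξ x t ω).Adj a b} :=
      Set.ext fun ω => ⟨fun h' => h'.1, fun h' => ⟨h', h.2⟩⟩
    have hmem : min a b ∉ S ∧ max a b ∉ S := by
      rcases le_total a b with hab | hab <;> simp [hab, h.2.1, h.2.2]
    rw [hset, setOf_expGraph_adj h.1]
    exact le_iSup₂ (f := fun p (_ : p ∈ {p : {p : ℕ × ℕ // p.1 < p.2} | p.1.1 ∉ S ∧ p.1.2 ∉ S}) =>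
      MeasurableSpace.comap (ξ p.1.1 p.1.2) inferInstance) _ hmem _ ⟨_, measurableSet_Iic, rfl⟩
  · rw [show {ω | ((expGraph ξ x t ω).isolate S).Adj a b} = ∅ from
      Set.eq_empty_of_forall_notMem fun ω h' => h ⟨h'.1.ne, h'.2⟩]
    exact @MeasurableSet.empty _ (tailSigma ξ S)

variable [MeasurableSpace Ω] {μ : Measure Ω}

lemma measurableSet_isolate_reachable (hmeas : ∀ i j, Measurable (ξ i j)) (S : Set ℕ) (u v : ℕ) :
    MeasurableSet {ω | ((expGraph ξ x t ω).isolate S).Reachable u v} :=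
  iSup₂_le (fun _ _ => (hmeas _ _).comap_le) _
    (measurableSet_reachable _ (measurableSet_isolate_adj_tailSigma S) u v)

lemma measurableSet_expGraph_adj (hmeas : ∀ i j, Measurable (ξ i j)) (a b : ℕ) :
    MeasurableSet {ω | (expGraph ξ x t ω).Adj a b} := by
  by_cases h : a = b
  · simp [h]
  · rw [setOf_expGraph_adj h]
    exact measurableSet_Iic.preimage (hmeas _ _)

/-- Edges with both endpoints outside `S` are independent of an edge leaving `S`. -/
lemma measure_isolate_reachable_inter_adj (hmeas : ∀ i j, Measurable (ξ i j))
    (hindep : iIndepFun (fun p : {p : ℕ × ℕ // p.1 < p.2} => ξ p.1.1 p.1.2) μ)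
    {S : Set ℕ} {u j : ℕ} (hu : u ∉ S) (hj : j ∈ S) (v : ℕ) :
    μ ({ω | ((expGraph ξ x t ω).isolate S).Reachable v u} ∩ {ω | (expGraph ξ x t ω).Adj u j}) =
      μ {ω | ((expGraph ξ x t ω).isolate S).Reachable v u} *
        μ {ω | (expGraph ξ x t ω).Adj u j} := by
  have huj : u ≠ j := fun h => hu (h ▸ hj)
  set T := {p : {p : ℕ × ℕ // p.1 < p.2} | p.1.1 ∉ S ∧ p.1.2 ∉ S}
  have hind := indep_biSup_compl (fun p => (hmeas p.1.1 p.1.2).comap_le) hindep.iIndep T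
  have hnot : edgeIndex huj ∈ Tᶜ := by
    rcases le_total u j with h | h <;> simp [T, edgeIndex, h, hj]
  have hadj : MeasurableSet[⨆ p ∈ Tᶜ, MeasurableSpace.comap (ξ p.1.1 p.1.2) inferInstance]
      {ω | (expGraph ξ x t ω).Adj u j} := by
    rw [setOf_expGraph_adj huj]
    exact le_iSup₂ (f := fun p (_ : p ∈ Tᶜ) => MeasurableSpace.comap (ξ p.1.1 p.1.2) inferInstance)
      _ hnot _ ⟨_, measurableSet_Iic, rfl⟩
  exact (Indep_iff _ _ _).1 hind _ _
    (measurableSet_reachable _ (measurableSet_isolate_adj_tailSigma S) v u) hadj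

end TailIndependence

section Attached

variable {Ω : Type*} {ξ : ℕ → ℕ → Ω → ℝ} {x : ℕ → ℝ} {t : ℝ}

lemma setOf_mem_attached (S : Set ℕ) (v : ℕ) :
    {ω | v ∈ (expGraph ξ x t ω).attached S} = ⋃ u, ⋃ j,
      {ω | u ∉ S ∧ j ∈ S ∧ ((expGraph ξ x t ω).isolate S).Reachable v u ∧
        (expGraph ξ x t ω).Adj u j} := by
  ext ω
  simp [SimpleGraph.attached]

variable [MeasurableSpace Ω] {μ : Measure Ω} [IsProbabilityMeasure μ]

lemma measurableSet_mem_attached (hmeas : ∀ i j, Measurable (ξ i j)) (S : Set ℕ) (v : ℕ) :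
    MeasurableSet {ω | v ∈ (expGraph ξ x t ω).attached S} := by
  rw [setOf_mem_attached]
  exact .iUnion fun u => .iUnion fun j => (MeasurableSet.const _).inter <|
    (MeasurableSet.const _).inter <|
      (measurableSet_isolate_reachable hmeas S v u).inter (measurableSet_expGraph_adj hmeas u j)

lemma measure_mem_attached_le (hmeas : ∀ i j, Measurable (ξ i j))
    (hlaw : ∀ i j, i < j → ∀ s : ℝ, 0 ≤ s →
      μ {ω | s < ξ i j ω} = ENNReal.ofReal (Real.exp (-s)))
    (hindep : iIndepFun (fun p : {p : ℕ × ℕ // p.1 < p.2} => ξ p.1.1 p.1.2) μ)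
    (hx : ∀ i, 0 ≤ x i) (ht : 0 ≤ t) (S : Set ℕ) (v : ℕ) :
    μ {ω | v ∈ (expGraph ξ x t ω).attached S} ≤
      ENNReal.ofReal t * (∑' j, S.indicator (fun i => ENNReal.ofReal (x i)) j) *
        ∑' u, Sᶜ.indicator (fun i => ENNReal.ofReal (x i)) u *
          μ {ω | ((expGraph ξ x t ω).isolate S).Reachable v u} := by
  have hterm : ∀ u j, μ {ω | u ∉ S ∧ j ∈ S ∧ ((expGraph ξ x t ω).isolate S).Reachable v u ∧
      (expGraph ξ x t ω).Adj u j} ≤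
        ENNReal.ofReal t * S.indicator (fun i => ENNReal.ofReal (x i)) j *
          (Sᶜ.indicator (fun i => ENNReal.ofReal (x i)) u *
            μ {ω | ((expGraph ξ x t ω).isolate S).Reachable v u}) := by
    intro u j
    by_cases h : u ∉ S ∧ j ∈ S
    · have hset : {ω | u ∉ S ∧ j ∈ S ∧ ((expGraph ξ x t ω).isolate S).Reachable v u ∧
          (expGraph ξ x t ω).Adj u j} = {ω | ((expGraph ξ x t ω).isolate S).Reachable v u} ∩
            {ω | (expGraph ξ x t ω).Adj u j} := by
        ext ω; simp [h]
      have hadj := measure_expGraph_adj_le (μ := μ) hmeas hlaw hx ht (a := u) (b := j)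
        fun h' => h.1 (h' ▸ h.2)
      rw [hset, measure_isolate_reachable_inter_adj hmeas hindep h.1 h.2,
        Set.indicator_of_mem h.2, Set.indicator_of_mem (show u ∈ Sᶜ from h.1)]
      calc _ ≤ μ {ω | ((expGraph ξ x t ω).isolate S).Reachable v u} *
            ENNReal.ofReal (t * x u * x j) := mul_le_mul_right hadj _
        _ = _ := by rw [ENNReal.ofReal_mul (mul_nonneg ht (hx _)), ENNReal.ofReal_mul ht]; ring
    · exact (measure_mono (t := ∅) fun ω hω => h ⟨hω.1, hω.2.1⟩).trans (by simp)
  calc μ {ω | v ∈ (expGraph ξ x t ω).attached S}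
      ≤ ∑' u, ∑' j, μ {ω | u ∉ S ∧ j ∈ S ∧ ((expGraph ξ x t ω).isolate S).Reachable v u ∧
          (expGraph ξ x t ω).Adj u j} := by
        rw [setOf_mem_attached]
        exact (measure_iUnion_le _).trans (ENNReal.tsum_le_tsum fun u => measure_iUnion_le _)
    _ ≤ _ := ENNReal.tsum_le_tsum fun u => ENNReal.tsum_le_tsum fun j => hterm u j
    _ = _ := by simp_rw [ENNReal.tsum_mul_right, ENNReal.tsum_mul_left]

lemma lintegral_attached_le (hmeas : ∀ i j, Measurable (ξ i j))
    (hlaw : ∀ i j, i < j → ∀ s : ℝ, 0 ≤ s →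
      μ {ω | s < ξ i j ω} = ENNReal.ofReal (Real.exp (-s)))
    (hindep : iIndepFun (fun p : {p : ℕ × ℕ // p.1 < p.2} => ξ p.1.1 p.1.2) μ)
    (hx : ∀ i, 0 ≤ x i) (ht : 0 ≤ t) (S : Set ℕ) :
    ∫⁻ ω, ∑' v, ((expGraph ξ x t ω).attached S).indicator
        (Sᶜ.indicator fun i => ENNReal.ofReal (x i)) v ∂μ ≤
      ENNReal.ofReal t * (∑' j, S.indicator (fun i => ENNReal.ofReal (x i)) j) *
        ∑' p : ℕ × ℕ, Sᶜ.indicator (fun i => ENNReal.ofReal (x i)) p.1 *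
          Sᶜ.indicator (fun i => ENNReal.ofReal (x i)) p.2 *
            μ {ω | ((expGraph ξ x t ω).isolate S).Reachable p.1 p.2} := by
  set w' := Sᶜ.indicator fun i => ENNReal.ofReal (x i)
  rw [ENNReal.tsum_prod']
  calc ∫⁻ ω, ∑' v, ((expGraph ξ x t ω).attached S).indicator w' v ∂μ
      = ∑' v, w' v * μ {ω | v ∈ (expGraph ξ x t ω).attached S} :=
        lintegral_tsum_indicator_const μ (measurableSet_mem_attached hmeas S) w'
    _ ≤ ∑' v, w' v * (ENNReal.ofReal t * (∑' j, S.indicator (fun i => ENNReal.ofReal (x i)) j) *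
          ∑' u, w' u * μ {ω | ((expGraph ξ x t ω).isolate S).Reachable v u}) :=
        ENNReal.tsum_le_tsum fun v =>
          mul_le_mul_right (measure_mem_attached_le hmeas hlaw hindep hx ht S v) _
    _ = _ := by
        simp_rw [← ENNReal.tsum_mul_left]
        exact tsum_congr fun v => tsum_congr fun u => by ring

lemma tsum_mul_mul_measure_isolate_reachable_lt_top (hmeas : ∀ i j, Measurable (ξ i j))
    (hlaw : ∀ i j, i < j → ∀ s : ℝ, 0 ≤ s →
      μ {ω | s < ξ i j ω} = ENNReal.ofReal (Real.exp (-s)))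
    (hindep : iIndepFun (fun p : {p : ℕ × ℕ // p.1 < p.2} => ξ p.1.1 p.1.2) μ)
    (hx : ∀ i, 0 ≤ x i) (ht : 0 ≤ t) (hx2 : ∑' i, ENNReal.ofReal (x i) ^ 2 ≠ ⊤) {S : Set ℕ}
    (hS : ENNReal.ofReal t * ∑' i, Sᶜ.indicator (fun i => ENNReal.ofReal (x i)) i ^ 2 < 1) :
    ∑' p : ℕ × ℕ, Sᶜ.indicator (fun i => ENNReal.ofReal (x i)) p.1 *
      Sᶜ.indicator (fun i => ENNReal.ofReal (x i)) p.2 *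
        μ {ω | ((expGraph ξ x t ω).isolate S).Reachable p.1 p.2} < ⊤ := by
  refine (tsum_mul_mul_measure_reachable_le μ _ _ _ fun n c hc =>
    measure_isolate_path_le hmeas hlaw hindep hx ht S c hc).trans_lt ?_
  refine ENNReal.mul_lt_top (ENNReal.inv_lt_top.2 (tsub_pos_of_lt hS)) ?_
  refine (ENNReal.tsum_le_tsum fun i => ?_).trans_lt hx2.lt_top
  gcongr
  exact Set.indicator_le_self _ _ i

lemma ae_tsum_attached_lt_top_and_reachPairSum_isolate_lt_top
    (hmeas : ∀ i j, Measurable (ξ i j))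
    (hlaw : ∀ i j, i < j → ∀ s : ℝ, 0 ≤ s →
      μ {ω | s < ξ i j ω} = ENNReal.ofReal (Real.exp (-s)))
    (hindep : iIndepFun (fun p : {p : ℕ × ℕ // p.1 < p.2} => ξ p.1.1 p.1.2) μ)
    (hx : ∀ i, 0 ≤ x i) (ht : 0 ≤ t) (hx2 : ∑' i, ENNReal.ofReal (x i) ^ 2 ≠ ⊤) {S : Set ℕ}
    (hS₀ : ∑' j, S.indicator (fun i => ENNReal.ofReal (x i)) j < ⊤)
    (hS : ENNReal.ofReal t * ∑' i, Sᶜ.indicator (fun i => ENNReal.ofReal (x i)) i ^ 2 < 1) :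
    ∀ᵐ ω ∂μ,
      ∑' v, ((expGraph ξ x t ω).attached S).indicator
        (Sᶜ.indicator fun i => ENNReal.ofReal (x i)) v < ⊤ ∧
      ((expGraph ξ x t ω).isolate S).reachPairSum
        (Sᶜ.indicator fun i => ENNReal.ofReal (x i)) < ⊤ := by
  have hΘ := tsum_mul_mul_measure_isolate_reachable_lt_top hmeas hlaw hindep hx ht hx2 hS
  have hreach := measurableSet_isolate_reachable (t := t) (x := x) hmeas S
  refine (ae_lt_top (Measurable.tsum fun v => measurable_const.indicator
    (measurableSet_mem_attached hmeas S v)) ?_).and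
    (ae_lt_top (measurable_reachPairSum hreach _) ?_)
  · exact ((lintegral_attached_le hmeas hlaw hindep hx ht S).trans_lt
      (ENNReal.mul_lt_top (ENNReal.mul_lt_top ENNReal.ofReal_lt_top hS₀) hΘ)).ne
  · rw [lintegral_reachPairSum μ hreach]
    exact hΘ.ne

end Attached

/-- For any `t ≥ 0` and `x ∈ ℓ₂⁺`, almost surely `S₂^{G_t} < ∞`; in particular,
almost surely every connected component of `G_t` has finite total weight. -/
theorem stmt4 {Ω : Type*} [MeasurableSpace Ω] (μ : Measure Ω) [IsProbabilityMeasure μ]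
    (x : ℕ → ℝ) (hx : ∀ i, 0 ≤ x i) (hx2 : Summable fun i => x i ^ 2)
    (ξ : ℕ → ℕ → Ω → ℝ) (hmeas : ∀ i j, Measurable (ξ i j))
    (hlaw : ∀ i j, i < j → ∀ s : ℝ, 0 ≤ s →
      μ {ω | s < ξ i j ω} = ENNReal.ofReal (Real.exp (-s)))
    (hindep : iIndepFun
      (fun p : {p : ℕ × ℕ // p.1 < p.2} => ξ p.1.1 p.1.2) μ)
    (t : ℝ) (ht : 0 ≤ t) :
    μ {ω | S2E x (expGraph ξ x t ω) < ⊤ ∧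
      ∀ k : ℕ, (∑' i : {i : ℕ // (expGraph ξ x t ω).Reachable k i},
        ENNReal.ofReal (x i)) < ⊤} = 1 := by
  have hx2' : ∑' i, ENNReal.ofReal (x i) ^ 2 ≠ ⊤ := by
    simp_rw [← ENNReal.ofReal_pow (hx _),
      ← ENNReal.ofReal_tsum_of_nonneg (fun i => sq_nonneg (x i)) hx2]
    exact ENNReal.ofReal_ne_top
  obtain ⟨s, hs⟩ := exists_finset_mul_tsum_indicator_compl_sq_lt_one hx2'
    (ENNReal.ofReal_ne_top (r := t))
  have hs₀ : ∑' j, (s : Set ℕ).indicator (fun i => ENNReal.ofReal (x i)) j < ⊤ := by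
    rw [← sum_eq_tsum_indicator]
    exact ENNReal.sum_lt_top.2 fun _ _ => ENNReal.ofReal_lt_top
  refine (measure_congr (ae_eq_univ.2 ?_)).trans measure_univ
  filter_upwards [ae_tsum_attached_lt_top_and_reachPairSum_isolate_lt_top hmeas hlaw hindep hx ht
    hx2' hs₀ hs] with ω ⟨hattached, hisolate⟩
  have hS2 := (expGraph ξ x t ω).S2E_lt_top_of_isolate x _ hs₀ hattached hisolate
  exact ⟨hS2, SimpleGraph.tsum_reachable_lt_top_of_S2E_lt_top hS2⟩
end

section
/- Let x = (x_i)_{i∈I}, y = (y_j)_{j∈J} be nonnegative weights with ∑ x_i² < ∞ and ∑ y_j² < ∞, and let B_t be the random bipartite graph where i ∈ I and j ∈ J are joined with probability 1 − exp(−t x_i y_j) independently. If I is finite then E[S₂^{B_t}] < ∞. -/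
/-!
Expanding the squares, `S₂^{B_t} = ∑ w_u w_v` over ordered pairs `(u, v)` in a common
component, so `E[S₂] = ∑ w_u w_v P(u ↔ v)`. A vertex `j ∈ J` is joined to anything else only
if it has an edge, which happens with probability at most `t X y_j`, where `X = ∑ᵢ xᵢ < ∞`
because `I` is finite; two distinct `j, j' ∈ J` need two distinct, hence independent, edges,
so `P(j ↔ j') ≤ (t X)² y_j y_j'`. Hence `E[S₂] ≤ (X + t X ∑ y_j²)² + ∑ xᵢ² + ∑ y_j² < ∞`.
-/

open MeasureTheory ProbabilityTheory Filter
open scoped ENNReal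

/-- The combined weight function on the bipartite vertex set `I ⊕ J`. -/
def bipW {ι κ : Type*} (x : ι → ℝ) (y : κ → ℝ) : ι ⊕ κ → ℝ := Sum.elim x y

lemma ENNReal.tsum_mul_tsum {α β : Type*} (f : α → ℝ≥0∞) (g : β → ℝ≥0∞) :
    (∑' a, f a) * ∑' b, g b = ∑' p : α × β, f p.1 * g p.2 := by
  rw [ENNReal.tsum_prod', ← ENNReal.tsum_mul_right]
  simp_rw [← ENNReal.tsum_mul_left]

lemma ENNReal.tsum_ne_top_of_finite {α : Type*} [Finite α] {f : α → ℝ≥0∞}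
    (hf : ∀ a, f a ≠ ⊤) : ∑' a, f a ≠ ⊤ := by
  have := Fintype.ofFinite α
  rw [tsum_fintype]
  exact ENNReal.sum_ne_top.2 fun a _ => hf a

lemma ENNReal.tsum_prod_mul_mul_add_ite {α : Type*} [DecidableEq α] (f g : α → ℝ≥0∞) :
    ∑' p : α × α, f p.1 * f p.2 * (g p.1 * g p.2 + if p.1 = p.2 then 1 else 0) =
      (∑' a, f a * g a) ^ 2 + ∑' a, f a ^ 2 := by
  simp_rw [mul_add, ENNReal.tsum_add, sq, ENNReal.tsum_mul_tsum]
  congr 1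
  · exact tsum_congr fun p => by ring
  · rw [ENNReal.tsum_prod']
    refine tsum_congr fun a => ?_
    rw [tsum_eq_single a fun b hb => by simp [Ne.symm hb]]
    simp

lemma tsum_ofReal_sq_ne_top {κ : Type*} {y : κ → ℝ} (hy : ∀ j, 0 ≤ y j)
    (hy2 : Summable fun j => y j ^ 2) : ∑' j, ENNReal.ofReal (y j) ^ 2 ≠ ⊤ := by
  simp_rw [← ENNReal.ofReal_pow (hy _),
    ← ENNReal.ofReal_tsum_of_nonneg (fun _ => sq_nonneg _) hy2]
  exact ENNReal.ofReal_ne_top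

/-- The sets `s a` need not be measurable: they are replaced by measurable hulls. -/
lemma lintegral_tsum_indicator_le {Ω α : Type*} [MeasurableSpace Ω] (μ : Measure Ω)
    (s : α → Set Ω) (c : α → ℝ≥0∞) (hc : (Function.support c).Countable) :
    ∫⁻ ω, ∑' a, (s a).indicator (fun _ => c a) ω ∂μ ≤ ∑' a, c a * μ (s a) := by
  have : Countable (Function.support c) := hc.to_subtype
  have hsupp : ∀ ω, (Function.support fun a => (s a).indicator (fun _ => c a) ω) ⊆
      Function.support c := fun ω a ha => by
    contrapose! ha
    simp [Function.notMem_support.1 ha]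
  calc ∫⁻ ω, ∑' a, (s a).indicator (fun _ => c a) ω ∂μ
      = ∫⁻ ω, ∑' a : Function.support c, (s a).indicator (fun _ => c a) ω ∂μ := by
        simp_rw [tsum_subtype_eq_of_support_subset (hsupp _)]
    _ ≤ ∫⁻ ω, ∑' a : Function.support c,
          (toMeasurable μ (s a)).indicator (fun _ => c a) ω ∂μ :=
        lintegral_mono fun ω => ENNReal.tsum_le_tsum fun a =>
          Set.indicator_le_indicator_of_subset (subset_toMeasurable μ _) (fun _ => zero_le) ω
    _ = ∑' a : Function.support c, c a * μ (s a) := by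
        rw [lintegral_tsum fun a =>
          (measurable_const.indicator (measurableSet_toMeasurable μ _)).aemeasurable]
        simp_rw [lintegral_indicator_const (measurableSet_toMeasurable μ _), measure_toMeasurable]
    _ = ∑' a, c a * μ (s a) :=
        tsum_subtype_eq_of_support_subset fun a (ha : c a * μ (s a) ≠ 0) =>
          left_ne_zero_of_mul ha

lemma measure_iUnion_inter_iUnion_le_of_iIndepSet {Ω ι κ : Type*} [MeasurableSpace Ω]
    [Countable ι] {μ : Measure Ω} {s : ι × κ → Set Ω} (hs : iIndepSet s μ) {j j' : κ}
    (hj : j ≠ j') :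
    μ ((⋃ i, s (i, j)) ∩ ⋃ i, s (i, j')) ≤ (∑' i, μ (s (i, j))) * ∑' i, μ (s (i, j')) := by
  classical
  have hpair : ∀ i i', μ (s (i, j) ∩ s (i', j')) = μ (s (i, j)) * μ (s (i', j')) := by
    intro i i'
    have hne : (i, j) ≠ (i', j') := fun h => hj (Prod.ext_iff.1 h).2
    simpa [Finset.prod_pair hne] using hs.meas_biInter {(i, j), (i', j')}
  rw [Set.iUnion_inter, ENNReal.tsum_mul_tsum, ENNReal.tsum_prod']
  refine (measure_iUnion_le _).trans (ENNReal.tsum_le_tsum fun i => ?_)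
  rw [Set.inter_iUnion]
  refine (measure_iUnion_le _).trans_eq ?_
  simp_rw [hpair]

lemma SimpleGraph.Reachable.exists_adj_right {V : Type*} {G : SimpleGraph V} {u v : V}
    (h : G.Reachable u v) (hne : u ≠ v) : ∃ w, G.Adj w v := by
  obtain ⟨p⟩ := h.symm
  cases p with
  | nil => exact absurd rfl hne
  | cons ha _ => exact ⟨_, ha.symm⟩

def SimpleGraph.sigmaComponentPairsEquiv {V : Type*} (G : SimpleGraph V) :
    (Σ C : G.ConnectedComponent,
      {v // G.connectedComponentMk v = C} × {v // G.connectedComponentMk v = C}) ≃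
      {p : V × V // G.Reachable p.1 p.2} where
  toFun q :=
    ⟨(q.2.1, q.2.2), SimpleGraph.ConnectedComponent.exact (q.2.1.2.trans q.2.2.2.symm)⟩
  invFun p := ⟨G.connectedComponentMk p.1.1, ⟨p.1.1, rfl⟩,
    ⟨p.1.2, (SimpleGraph.ConnectedComponent.sound p.2).symm⟩⟩
  left_inv := by
    rintro ⟨C, ⟨u, rfl⟩, ⟨v, hv⟩⟩
    rfl
  right_inv _ := rfl

lemma S2E_eq_tsum_indicator_reachable {V : Type*} (w : V → ℝ) (G : SimpleGraph V) :
    S2E w G = ∑' p : V × V, {p : V × V | G.Reachable p.1 p.2}.indicator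
      (fun p => ENNReal.ofReal (w p.1) * ENNReal.ofReal (w p.2)) p := by
  simp_rw [S2E, compWE, sq, ENNReal.tsum_mul_tsum]
  rw [← tsum_subtype]
  exact (ENNReal.tsum_sigma' _).symm.trans (G.sigmaComponentPairsEquiv.tsum_eq
    fun p => ENNReal.ofReal (w p.1.1) * ENNReal.ofReal (w p.1.2))

lemma countable_support_bipW {ι κ : Type*} [Countable ι] (x : ι → ℝ) {y : κ → ℝ}
    (hy : (Function.support y).Countable) : (Function.support (bipW x y)).Countable := by
  refine ((Set.countable_univ.image Sum.inl).union (hy.image Sum.inr)).mono ?_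
  rintro (i | j) hv
  · exact .inl ⟨i, trivial, rfl⟩
  · exact .inr ⟨j, hv, rfl⟩

lemma lintegral_S2E_le {Ω V : Type*} [MeasurableSpace Ω] (μ : Measure Ω) (w : V → ℝ)
    (hw : (Function.support w).Countable) (G : Ω → SimpleGraph V) :
    ∫⁻ ω, S2E w (G ω) ∂μ ≤ ∑' p : V × V,
      ENNReal.ofReal (w p.1) * ENNReal.ofReal (w p.2) * μ {ω | (G ω).Reachable p.1 p.2} := by
  simp_rw [S2E_eq_tsum_indicator_reachable]
  refine lintegral_tsum_indicator_le μ (fun p => {ω | (G ω).Reachable p.1 p.2}) _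
    ((hw.prod hw).mono fun p hp => ?_)
  have hp : ENNReal.ofReal (w p.1) * ENNReal.ofReal (w p.2) ≠ 0 := hp
  constructor <;> intro h0 <;> simp [h0] at hp

section BipartiteRandomGraph

variable {Ω ι κ : Type*}

noncomputable def bipReachWeight [MeasurableSpace Ω] (μ : Measure Ω)
    (B : Ω → SimpleGraph (ι ⊕ κ)) : ι ⊕ κ → ℝ≥0∞ :=
  Sum.elim (fun _ => 1) fun j => ∑' i, μ {ω | (B ω).Adj (.inl i) (.inr j)}

lemma reachable_inr_subset_iUnion_adj (B : Ω → SimpleGraph (ι ⊕ κ))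
    (hbipJ : ∀ ω j j', ¬ (B ω).Adj (Sum.inr j) (Sum.inr j')) {u : ι ⊕ κ} {j : κ}
    (hu : u ≠ .inr j) :
    {ω | (B ω).Reachable u (.inr j)} ⊆ ⋃ i, {ω | (B ω).Adj (.inl i) (.inr j)} := by
  intro ω (h : (B ω).Reachable u (.inr j))
  obtain ⟨i | j', hadj⟩ := h.exists_adj_right hu
  · exact Set.mem_iUnion.2 ⟨i, hadj⟩
  · exact absurd hadj (hbipJ ω j' j)

/-- A vertex of `J` can only be reached through one of its edges, and for two distinct vertices
of `J` these edges are distinct, hence independent. -/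
lemma measure_reachable_le_of_ne [MeasurableSpace Ω] [Countable ι] (μ : Measure Ω)
    [IsProbabilityMeasure μ]
    (B : Ω → SimpleGraph (ι ⊕ κ)) (hbipJ : ∀ ω j j', ¬ (B ω).Adj (Sum.inr j) (Sum.inr j'))
    (hindep : iIndepSet (fun p : ι × κ => {ω | (B ω).Adj (Sum.inl p.1) (Sum.inr p.2)}) μ)
    {u v : ι ⊕ κ} (huv : u ≠ v) :
    μ {ω | (B ω).Reachable u v} ≤ bipReachWeight μ B u * bipReachWeight μ B v := by
  have hJ : ∀ {u j}, u ≠ .inr j →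
      μ {ω | (B ω).Reachable u (.inr j)} ≤ bipReachWeight μ B (.inr j) := fun hu =>
    (measure_mono (reachable_inr_subset_iUnion_adj B hbipJ hu)).trans (measure_iUnion_le _)
  rcases u with i | j <;> rcases v with i' | j'
  · simpa [bipReachWeight] using prob_le_one
  · simpa [bipReachWeight] using hJ huv
  · simp_rw [SimpleGraph.reachable_comm (u := Sum.inr j)]
    simpa [bipReachWeight, mul_comm] using hJ huv.symm
  · have hjj : j ≠ j' := fun h => huv (congrArg _ h)
    calc μ {ω | (B ω).Reachable (.inr j) (.inr j')}
        ≤ μ ((⋃ i, {ω | (B ω).Adj (.inl i) (.inr j)}) ∩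
            ⋃ i, {ω | (B ω).Adj (.inl i) (.inr j')}) :=
          measure_mono fun ω h =>
            ⟨reachable_inr_subset_iUnion_adj B hbipJ huv.symm (SimpleGraph.Reachable.symm h),
              reachable_inr_subset_iUnion_adj B hbipJ huv h⟩
      _ ≤ _ := measure_iUnion_inter_iUnion_le_of_iIndepSet hindep hjj

lemma bipReachWeight_inr_le [MeasurableSpace Ω] (μ : Measure Ω) (B : Ω → SimpleGraph (ι ⊕ κ))
    (x : ι → ℝ) (y : κ → ℝ) (hy : ∀ j, 0 ≤ y j) (t : ℝ) (ht : 0 ≤ t)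
    (hprob : ∀ i j, μ {ω | (B ω).Adj (Sum.inl i) (Sum.inr j)} =
      ENNReal.ofReal (1 - Real.exp (-(t * x i * y j)))) (j : κ) :
    bipReachWeight μ B (.inr j) ≤
      ENNReal.ofReal t * (∑' i, ENNReal.ofReal (x i)) * ENNReal.ofReal (y j) := by
  have hedge (i : ι) : μ {ω | (B ω).Adj (.inl i) (.inr j)} ≤
      ENNReal.ofReal t * ENNReal.ofReal (x i) * ENNReal.ofReal (y j) := by
    rw [hprob, ← ENNReal.ofReal_mul ht, ← ENNReal.ofReal_mul' (hy j)]
    exact ENNReal.ofReal_le_ofReal (by linarith [Real.add_one_le_exp (-(t * x i * y j))])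
  calc bipReachWeight μ B (.inr j)
      ≤ ∑' i, ENNReal.ofReal t * ENNReal.ofReal (x i) * ENNReal.ofReal (y j) :=
        ENNReal.tsum_le_tsum hedge
    _ = ENNReal.ofReal t * (∑' i, ENNReal.ofReal (x i)) * ENNReal.ofReal (y j) := by
        rw [ENNReal.tsum_mul_right, ENNReal.tsum_mul_left]

lemma tsum_ofReal_bipW_mul_bipReachWeight_le [MeasurableSpace Ω] (μ : Measure Ω)
    (B : Ω → SimpleGraph (ι ⊕ κ)) (x : ι → ℝ) (y : κ → ℝ) (hy : ∀ j, 0 ≤ y j) (t : ℝ)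
    (ht : 0 ≤ t) (hprob : ∀ i j, μ {ω | (B ω).Adj (Sum.inl i) (Sum.inr j)} =
      ENNReal.ofReal (1 - Real.exp (-(t * x i * y j)))) :
    ∑' v, ENNReal.ofReal (bipW x y v) * bipReachWeight μ B v ≤
      (∑' i, ENNReal.ofReal (x i)) +
        ENNReal.ofReal t * (∑' i, ENNReal.ofReal (x i)) * ∑' j, ENNReal.ofReal (y j) ^ 2 := by
  rw [ENNReal.summable.tsum_sum ENNReal.summable, ← ENNReal.tsum_mul_left]
  refine add_le_add (tsum_congr fun i => mul_one _).le (ENNReal.tsum_le_tsum fun j => ?_)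
  calc ENNReal.ofReal (y j) * bipReachWeight μ B (.inr j)
      ≤ ENNReal.ofReal (y j) *
          (ENNReal.ofReal t * (∑' i, ENNReal.ofReal (x i)) * ENNReal.ofReal (y j)) :=
        mul_le_mul_right (bipReachWeight_inr_le μ B x y hy t ht hprob j) _
    _ = _ := by ring

end BipartiteRandomGraph

theorem stmt6_general {Ω ι κ : Type*} [Finite ι] [MeasurableSpace Ω] (μ : Measure Ω)
    [IsProbabilityMeasure μ]
    (x : ι → ℝ) (y : κ → ℝ) (hy : ∀ j, 0 ≤ y j)
    (hy2 : Summable fun j => y j ^ 2)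
    (t : ℝ) (ht : 0 ≤ t)
    (B : Ω → SimpleGraph (ι ⊕ κ))
    (hbipJ : ∀ ω j j', ¬ (B ω).Adj (Sum.inr j) (Sum.inr j'))
    (hprob : ∀ i j, μ {ω | (B ω).Adj (Sum.inl i) (Sum.inr j)} =
      ENNReal.ofReal (1 - Real.exp (-(t * x i * y j))))
    (hindep : iIndepSet
      (fun p : ι × κ => {ω | (B ω).Adj (Sum.inl p.1) (Sum.inr p.2)}) μ) :
    ∫⁻ ω, S2E (bipW x y) (B ω) ∂μ < ⊤ := by
  classical
  set w : ι ⊕ κ → ℝ≥0∞ := fun v => ENNReal.ofReal (bipW x y v)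
  set d := bipReachWeight μ B
  have hreach (u v : ι ⊕ κ) :
      μ {ω | (B ω).Reachable u v} ≤ d u * d v + if u = v then 1 else 0 := by
    split_ifs with huv
    · exact prob_le_one.trans le_add_self
    · simpa using measure_reachable_le_of_ne μ B hbipJ hindep huv
  have hX : ∑' i, ENNReal.ofReal (x i) ≠ ⊤ :=
    ENNReal.tsum_ne_top_of_finite fun _ => ENNReal.ofReal_ne_top
  have hY := tsum_ofReal_sq_ne_top hy hy2
  have hwd : ∑' v, w v * d v ≠ ⊤ := ne_top_of_le_ne_top (by finiteness)
    (tsum_ofReal_bipW_mul_bipReachWeight_le μ B x y hy t ht hprob)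
  have hw2 : ∑' v, w v ^ 2 ≠ ⊤ := by
    rw [ENNReal.summable.tsum_sum ENNReal.summable]
    exact ENNReal.add_ne_top.2
      ⟨ENNReal.tsum_ne_top_of_finite fun _ => ENNReal.pow_ne_top ENNReal.ofReal_ne_top, hY⟩
  have hsupp := countable_support_bipW x (y := y)
    (by simpa [Function.support] using hy2.countable_support)
  calc ∫⁻ ω, S2E (bipW x y) (B ω) ∂μ
      ≤ ∑' p : (ι ⊕ κ) × (ι ⊕ κ), w p.1 * w p.2 * μ {ω | (B ω).Reachable p.1 p.2} :=
        lintegral_S2E_le μ _ hsupp B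
    _ ≤ ∑' p : (ι ⊕ κ) × (ι ⊕ κ),
          w p.1 * w p.2 * (d p.1 * d p.2 + if p.1 = p.2 then 1 else 0) :=
        ENNReal.tsum_le_tsum fun p => mul_le_mul_right (hreach _ _) _
    _ = (∑' v, w v * d v) ^ 2 + ∑' v, w v ^ 2 := ENNReal.tsum_prod_mul_mul_add_ite w d
    _ < ⊤ := by finiteness

/-- If the side `I` of the bipartite random graph `B_t` is finite then
`E[S₂^{B_t}] < ∞`. -/
theorem stmt6 {Ω ι κ : Type*} [Finite ι] [MeasurableSpace Ω] (μ : Measure Ω)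
    [IsProbabilityMeasure μ]
    (x : ι → ℝ) (y : κ → ℝ) (hx : ∀ i, 0 ≤ x i) (hy : ∀ j, 0 ≤ y j)
    (hx2 : Summable fun i => x i ^ 2) (hy2 : Summable fun j => y j ^ 2)
    (t : ℝ) (ht : 0 ≤ t)
    (B : Ω → SimpleGraph (ι ⊕ κ))
    (hbipI : ∀ ω i i', ¬ (B ω).Adj (Sum.inl i) (Sum.inl i'))
    (hbipJ : ∀ ω j j', ¬ (B ω).Adj (Sum.inr j) (Sum.inr j'))
    (hprob : ∀ i j, μ {ω | (B ω).Adj (Sum.inl i) (Sum.inr j)} =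
      ENNReal.ofReal (1 - Real.exp (-(t * x i * y j))))
    (hindep : iIndepSet
      (fun p : ι × κ => {ω | (B ω).Adj (Sum.inl p.1) (Sum.inr p.2)}) μ) :
    ∫⁻ ω, S2E (bipW x y) (B ω) ∂μ < ⊤ :=
  stmt6_general μ x y hy hy2 t ht B hbipJ hprob hindep
end
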